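/- arXiv:2103.05684 — 5 statements merged into one kernel-verified Lean document; each statement's English description precedes it below -/
import Mathlib

section
/- Let ν be a σ-finite measure on a measurable space Y, let k(θ,·) and k(θ',·) be positive probability densities w.r.t. ν, let p be a nonnegative measurable function with 0 < ∫ p dν < ∞, and define Ψ_α(q) = ∫ f_α(q(y)/p(y)) p(y) ν(dy) where f_α(u) = (u^α - 1)/(α(α-1)) for α ∈ (0,1). If Ψ_α(k(θ',·)) < ∞ then Ψ_α(k(θ,·)) ≤ ∫ (k(θ',y)^α p(y)^{1-α})/(α-1) · log(k(θ,y)/k(θ',y)) ν(dy) + Ψ_α(k(θ',·)). -/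
/-!
Since `log x ≤ x - 1`, applied to `x = (a / b) ^ α`, gives `b ^ α * (1 + α * log (a / b)) ≤ a ^ α`,
the integrand of `Ψ_α(k(θ, ·))` is bounded pointwise by the integrand of the right-hand side
(multiplying by `1 / (α (α - 1)) < 0` reverses the inequality); integrating gives the bound.
-/

open MeasureTheory

namespace Real

theorem rpow_mul_one_add_mul_log_div_le {a b : ℝ} (ha : 0 < a) (hb : 0 < b) (α : ℝ) :
    b ^ α * (1 + α * log (a / b)) ≤ a ^ α := by
  have hlog : log ((a / b) ^ α) ≤ (a / b) ^ α - 1 :=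
    log_le_sub_one_of_pos (rpow_pos_of_pos (div_pos ha hb) α)
  rw [log_rpow (div_pos ha hb), div_rpow ha.le hb.le] at hlog
  have hbα : 0 < b ^ α := rpow_pos_of_pos hb α
  calc b ^ α * (1 + α * log (a / b)) ≤ b ^ α * (1 + (a ^ α / b ^ α - 1)) := by gcongr
    _ = a ^ α := by field_simp; ring

/-- At `c = 0` both sides vanish, because `x / 0 = 0` and `0 ^ (1 - α) = 0`. -/
theorem div_rpow_sub_one_mul {x c α : ℝ} (hx : 0 ≤ x) (hc : 0 ≤ c) (hα0 : α ≠ 0) (hα1 : α ≠ 1) :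
    ((x / c) ^ α - 1) * c = x ^ α * c ^ (1 - α) - c := by
  rcases hc.eq_or_lt with rfl | hc
  · simp [zero_rpow (sub_ne_zero.mpr hα1.symm), zero_rpow hα0]
  · rw [div_rpow hx hc.le, rpow_sub hc, rpow_one]
    field_simp

theorem alphaDivergence_integrand_le {a b c α : ℝ} (ha : 0 < a) (hb : 0 < b) (hc : 0 ≤ c)
    (hα0 : 0 < α) (hα1 : α < 1) :
    ((a / c) ^ α - 1) / (α * (α - 1)) * c ≤
      b ^ α * c ^ (1 - α) / (α - 1) * log (a / b) + ((b / c) ^ α - 1) / (α * (α - 1)) * c := by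
  have hden : α * (α - 1) < 0 := mul_neg_of_pos_of_neg hα0 (by linarith)
  rw [div_mul_eq_mul_div _ _ c, div_mul_eq_mul_div _ _ c,
    div_rpow_sub_one_mul ha.le hc hα0.ne' hα1.ne, div_rpow_sub_one_mul hb.le hc hα0.ne' hα1.ne,
    show b ^ α * c ^ (1 - α) / (α - 1) * log (a / b)
      = α * b ^ α * c ^ (1 - α) * log (a / b) / (α * (α - 1)) by field_simp,
    ← add_div]
  apply div_le_div_of_nonpos_of_le hden.le
  nlinarith [rpow_mul_one_add_mul_log_div_le ha hb α, rpow_nonneg hc (1 - α)]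

end Real

theorem stmt_1_general {Y : Type*} [MeasurableSpace Y] (ν : Measure Y)
    (α : ℝ) (hα0 : 0 < α) (hα1 : α < 1)
    (q q' p : Y → ℝ)
    (hq : ∀ y, 0 < q y) (hq' : ∀ y, 0 < q' y)
    (hp : ∀ y, 0 ≤ p y)
    (hΨ' : Integrable (fun y => ((q' y / p y) ^ α - 1) / (α * (α - 1)) * p y) ν)
    (hΨ : Integrable (fun y => ((q y / p y) ^ α - 1) / (α * (α - 1)) * p y) ν)
    (hlog : Integrable
      (fun y => (q' y) ^ α * (p y) ^ (1 - α) / (α - 1) * Real.log (q y / q' y)) ν) :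
    ∫ y, ((q y / p y) ^ α - 1) / (α * (α - 1)) * p y ∂ν ≤
      (∫ y, (q' y) ^ α * (p y) ^ (1 - α) / (α - 1) * Real.log (q y / q' y) ∂ν) +
        ∫ y, ((q' y / p y) ^ α - 1) / (α * (α - 1)) * p y ∂ν := by
  rw [← integral_add hlog hΨ']
  exact integral_mono hΨ (hlog.add hΨ') fun y =>
    Real.alphaDivergence_integrand_le (hq y) (hq' y) (hp y) hα0 hα1

theorem stmt_1 {Y : Type*} [MeasurableSpace Y] (ν : Measure Y) [SigmaFinite ν]
    (α : ℝ) (hα0 : 0 < α) (hα1 : α < 1)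
    (q q' p : Y → ℝ)
    (hq : ∀ y, 0 < q y) (hq' : ∀ y, 0 < q' y)
    (hqd : ∫ y, q y ∂ν = 1) (hq'd : ∫ y, q' y ∂ν = 1)
    (hp : ∀ y, 0 ≤ p y) (hpInt : Integrable p ν)
    (hppos : 0 < ∫ y, p y ∂ν)
    (hΨ' : Integrable (fun y => ((q' y / p y) ^ α - 1) / (α * (α - 1)) * p y) ν)
    (hΨ : Integrable (fun y => ((q y / p y) ^ α - 1) / (α * (α - 1)) * p y) ν)
    (hlog : Integrable
      (fun y => (q' y) ^ α * (p y) ^ (1 - α) / (α - 1) * Real.log (q y / q' y)) ν) :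
    ∫ y, ((q y / p y) ^ α - 1) / (α * (α - 1)) * p y ∂ν ≤
      (∫ y, (q' y) ^ α * (p y) ^ (1 - α) / (α - 1) * Real.log (q y / q' y) ∂ν) +
        ∫ y, ((q' y / p y) ^ α - 1) / (α * (α - 1)) * p y ∂ν :=
  stmt_1_general ν α hα0 hα1 q q' p hq hq' hp hΨ' hΨ hlog
end

section
/- Under the assumptions of Proposition 1, if a sequence (θ_n) satisfies for all n ≥ 1 the condition ∫ (k(θ_n,y)^α p(y)^{1-α})/(α-1) log(k(θ_{n+1},y)/k(θ_n,y)) ν(dy) ≤ 0, and Ψ_α(k(θ_1,·)) < ∞, then the sequence (Ψ_α(k(θ_n,·)))_{n≥1} is nonincreasing. -/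
open MeasureTheory

noncomputable def falpha (α u : ℝ) : ℝ :=
  if α = 0 then -Real.log u else (u ^ α - 1) / (α * (α - 1))

lemma aux_ineq (α A B P Q L : ℝ) (hαpos : 0 < α) (hα1 : α < 1) (hP : 0 < P)
    (hQ : 0 ≤ Q) (hcore : α * (A * L) ≤ B - A) :
    (B / P - 1) / (α * (α - 1)) * (Q * P) ≤
      (A / P - 1) / (α * (α - 1)) * (Q * P) + A * Q / (α - 1) * L := by
  have hneg : α * (α - 1) < 0 := mul_neg_of_pos_of_neg hαpos (by linarith)
  rw [← sub_nonneg]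
  have hE : (A / P - 1) / (α * (α - 1)) * (Q * P) + A * Q / (α - 1) * L
      - (B / P - 1) / (α * (α - 1)) * (Q * P)
      = -(((A - B) + α * (A * L)) * Q) / -(α * (α - 1)) := by
    have h1 : P ≠ 0 := hP.ne'
    have h2 : α ≠ 0 := hαpos.ne'
    have h3 : α - 1 ≠ 0 := by linarith
    field_simp
    ring
  rw [hE]
  apply div_nonneg _ (by linarith)
  have : ((A - B) + α * (A * L)) * Q ≤ 0 :=
    mul_nonpos_of_nonpos_of_nonneg (by linarith) hQ
  linarith

lemma key_pointwise (α : ℝ) (hα0 : 0 ≤ α) (hα1 : α < 1) (a b p : ℝ)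
    (ha : 0 < a) (hb : 0 < b) (hp : 0 ≤ p) :
    falpha α (b / p) * p ≤
      falpha α (a / p) * p + a ^ α * p ^ (1 - α) / (α - 1) * Real.log (b / a) := by
  rcases hp.eq_or_lt with hp0 | hp0
  · simp [← hp0, Real.zero_rpow (by linarith : (1:ℝ) - α ≠ 0)]
  rcases eq_or_lt_of_le hα0 with hz | hαpos
  · subst hz
    have hf : ∀ u, falpha 0 u = -Real.log u := fun u => by simp [falpha]
    rw [hf, hf, Real.rpow_zero, sub_zero, Real.rpow_one,
      Real.log_div hb.ne' hp0.ne', Real.log_div ha.ne' hp0.ne',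
      Real.log_div hb.ne' ha.ne']
    exact le_of_eq (by ring)
  · have hαne : α ≠ 0 := hαpos.ne'
    simp only [falpha, if_neg hαne]
    have hP : (0:ℝ) < p ^ α := Real.rpow_pos_of_pos hp0 α
    have hQ : (0:ℝ) < p ^ (1 - α) := Real.rpow_pos_of_pos hp0 (1 - α)
    have e1 : (b / p) ^ α = b ^ α / p ^ α := Real.div_rpow hb.le hp α
    have e2 : (a / p) ^ α = a ^ α / p ^ α := Real.div_rpow ha.le hp α
    have e3 : p ^ (1 - α) * p ^ α = p := by
      rw [← Real.rpow_add hp0]; norm_num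
    set L := Real.log (b / a) with hL
    have hcore : α * (a ^ α * L) ≤ b ^ α - a ^ α := by
      have h1 : 1 + L * α ≤ (b / a) ^ α := by
        rw [Real.rpow_def_of_pos (div_pos hb ha)]
        linarith [Real.add_one_le_exp (L * α)]
      have h2 : (b / a) ^ α = b ^ α / a ^ α := Real.div_rpow hb.le ha.le α
      have hA : (0:ℝ) < a ^ α := Real.rpow_pos_of_pos ha α
      rw [h2] at h1
      have h3 := mul_le_mul_of_nonneg_right h1 hA.le
      rw [div_mul_cancel₀ _ hA.ne'] at h3
      nlinarith
    have := aux_ineq α (a ^ α) (b ^ α) (p ^ α) (p ^ (1 - α)) L hαpos hα1 hP hQ.le hcore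
    rw [e3] at this
    rw [e1, e2]
    convert this using 2

theorem stmt_3 {Y T : Type*} [MeasurableSpace Y] (ν : Measure Y) [SigmaFinite ν]
    (α : ℝ) (hα0 : 0 ≤ α) (hα1 : α < 1)
    (k : T → Y → ℝ) (p : Y → ℝ)
    (hk : ∀ θ y, 0 < k θ y) (hknorm : ∀ θ, ∫ y, k θ y ∂ν = 1)
    (hp : ∀ y, 0 ≤ p y) (hpInt : Integrable p ν) (hppos : 0 < ∫ y, p y ∂ν)
    (θ : ℕ → T)
    (hΨInt : ∀ n, Integrable (fun y => falpha α (k (θ n) y / p y) * p y) ν)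
    (hlogInt : ∀ n, Integrable
      (fun y => (k (θ n) y) ^ α * (p y) ^ (1 - α) / (α - 1) *
        Real.log (k (θ (n + 1)) y / k (θ n) y)) ν)
    (hcond : ∀ n, ∫ y, (k (θ n) y) ^ α * (p y) ^ (1 - α) / (α - 1) *
        Real.log (k (θ (n + 1)) y / k (θ n) y) ∂ν ≤ 0) :
    ∀ n, ∫ y, falpha α (k (θ (n + 1)) y / p y) * p y ∂ν ≤
      ∫ y, falpha α (k (θ n) y / p y) * p y ∂ν := by
  intro n
  have hpt : ∀ y, falpha α (k (θ (n + 1)) y / p y) * p y ≤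
      falpha α (k (θ n) y / p y) * p y +
        (k (θ n) y) ^ α * (p y) ^ (1 - α) / (α - 1) *
          Real.log (k (θ (n + 1)) y / k (θ n) y) := fun y =>
    key_pointwise α hα0 hα1 (k (θ n) y) (k (θ (n + 1)) y) (p y)
      (hk _ y) (hk _ y) (hp y)
  calc ∫ y, falpha α (k (θ (n + 1)) y / p y) * p y ∂ν
      ≤ ∫ y, (falpha α (k (θ n) y / p y) * p y +
          (k (θ n) y) ^ α * (p y) ^ (1 - α) / (α - 1) *
            Real.log (k (θ (n + 1)) y / k (θ n) y)) ∂ν :=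
        integral_mono (hΨInt (n + 1)) ((hΨInt n).add (hlogInt n)) hpt
    _ = (∫ y, falpha α (k (θ n) y / p y) * p y ∂ν) +
        ∫ y, (k (θ n) y) ^ α * (p y) ^ (1 - α) / (α - 1) *
          Real.log (k (θ (n + 1)) y / k (θ n) y) ∂ν :=
        integral_add (hΨInt n) (hlogInt n)
    _ ≤ ∫ y, falpha α (k (θ n) y / p y) * p y ∂ν := by linarith [hcond n]
end

section
/- Assume the setting of Theorem 1 with α ∈ [0,1) and let (b_n) be a nonnegative sequence. If θ_{n+1} = argmax over θ of ∫ [k(θ_n,y)^α p(y)^{1-α} + b_n k(θ_n,y)] log(k(θ,y)/k(θ_n,y)) ν(dy) (assumed uniquely defined), then ∫ (k(θ_n,y)^α p(y)^{1-α})/(α-1) log(k(θ_{n+1},y)/k(θ_n,y)) ν(dy) ≤ 0 for all n, so (Ψ_α(k(θ_n,·))) is nonincreasing. -/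
open MeasureTheory

lemma pointwise_key (α : ℝ) (hα0 : 0 ≤ α) (hα1 : α < 1) (a b p : ℝ)
    (ha : 0 < a) (hb : 0 < b) (hp : 0 ≤ p) :
    falpha α (b / p) * p - falpha α (a / p) * p ≤
      a ^ α * p ^ (1 - α) / (α - 1) * Real.log (b / a) := by
  rcases hp.eq_or_lt with hp0 | hp0
  · rw [← hp0]
    simp [Real.zero_rpow (by intro h; linarith : (1:ℝ) - α ≠ 0)]
  rcases hα0.eq_or_lt with hα | hα
  · subst hα
    simp only [falpha, if_pos rfl, eq_self_iff_true, if_true, Real.rpow_zero, sub_zero,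
      Real.rpow_one, one_mul]
    rw [Real.log_div hb.ne' hp0.ne', Real.log_div ha.ne' hp0.ne',
      Real.log_div hb.ne' ha.ne']
    ring_nf
    linarith
  · have hαne : α ≠ 0 := hα.ne'
    have hα1' : α - 1 < 0 := by linarith
    have hc : α * (α - 1) < 0 := mul_neg_of_pos_of_neg hα hα1'
    simp only [falpha, if_neg hαne]
    have hA : (0:ℝ) < a ^ α := Real.rpow_pos_of_pos ha α
    have hB : (0:ℝ) < b ^ α := Real.rpow_pos_of_pos hb α
    have hP : (0:ℝ) < p ^ α := Real.rpow_pos_of_pos hp0 α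
    have hQ : (0:ℝ) < p ^ (1 - α) := Real.rpow_pos_of_pos hp0 _
    have hPQ : p ^ α * p ^ (1 - α) = p := by
      rw [← Real.rpow_add hp0]; simp
    have e1 : (b / p) ^ α = b ^ α / p ^ α := Real.div_rpow hb.le hp0.le α
    have e2 : (a / p) ^ α = a ^ α / p ^ α := Real.div_rpow ha.le hp0.le α
    have hx : Real.log ((b / a) ^ α) ≤ (b / a) ^ α - 1 :=
      Real.log_le_sub_one_of_pos (Real.rpow_pos_of_pos (div_pos hb ha) α)
    rw [Real.log_rpow (div_pos hb ha), Real.div_rpow hb.le ha.le] at hx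
    have key : α * (a ^ α) * Real.log (b / a) ≤ b ^ α - a ^ α := by
      have := mul_le_mul_of_nonneg_left hx hA.le
      have h3 : a ^ α * (b ^ α / a ^ α - 1) = b ^ α - a ^ α := by
        field_simp
      nlinarith
    rw [e1, e2]
    have hLHS : ((b ^ α / p ^ α - 1) / (α * (α - 1))) * p -
        ((a ^ α / p ^ α - 1) / (α * (α - 1))) * p =
        (b ^ α - a ^ α) * p ^ (1 - α) / (α * (α - 1)) := by
      have hq : p ^ (1 - α) = p / p ^ α := by
        rw [Real.rpow_sub hp0, Real.rpow_one]
      rw [hq]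
      field_simp
      ring
    rw [hLHS, div_le_iff_of_neg hc]
    have hR : a ^ α * p ^ (1 - α) / (α - 1) * Real.log (b / a) * (α * (α - 1)) =
        α * (a ^ α) * Real.log (b / a) * p ^ (1 - α) := by
      field_simp [sub_ne_zero.mpr hα1.ne]
    rw [hR]
    nlinarith [mul_le_mul_of_nonneg_right key hQ.le]

theorem stmt_5 {Y T : Type*} [MeasurableSpace Y] (ν : Measure Y) [SigmaFinite ν]
    (α : ℝ) (hα0 : 0 ≤ α) (hα1 : α < 1)
    (k : T → Y → ℝ) (p : Y → ℝ)
    (hk : ∀ θ y, 0 < k θ y) (hknorm : ∀ θ, ∫ y, k θ y ∂ν = 1)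
    (hp : ∀ y, 0 ≤ p y) (hpInt : Integrable p ν) (hppos : 0 < ∫ y, p y ∂ν)
    (θ : ℕ → T) (b : ℕ → ℝ) (hb : ∀ n, 0 ≤ b n)
    (hΨInt : ∀ n, Integrable (fun y => falpha α (k (θ n) y / p y) * p y) ν)
    (hInt1 : ∀ n, ∀ t : T, Integrable
      (fun y => (k (θ n) y) ^ α * (p y) ^ (1 - α) *
        Real.log (k t y / k (θ n) y)) ν)
    (hInt2 : ∀ n, ∀ t : T, Integrable
      (fun y => k (θ n) y * Real.log (k t y / k (θ n) y)) ν)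
    (hmax : ∀ n, ∀ t : T,
      ∫ y, ((k (θ n) y) ^ α * (p y) ^ (1 - α) + b n * k (θ n) y) *
          Real.log (k t y / k (θ n) y) ∂ν ≤
        ∫ y, ((k (θ n) y) ^ α * (p y) ^ (1 - α) + b n * k (θ n) y) *
          Real.log (k (θ (n + 1)) y / k (θ n) y) ∂ν) :
    (∀ n, ∫ y, (k (θ n) y) ^ α * (p y) ^ (1 - α) / (α - 1) *
        Real.log (k (θ (n + 1)) y / k (θ n) y) ∂ν ≤ 0) ∧
      ∀ n, ∫ y, falpha α (k (θ (n + 1)) y / p y) * p y ∂ν ≤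
        ∫ y, falpha α (k (θ n) y / p y) * p y ∂ν := by
  have hkInt : ∀ t, Integrable (k t) ν := by
    intro t
    by_contra h
    have h1 := hknorm t
    rw [integral_undef h] at h1
    norm_num at h1
  -- Gibbs' inequality
  have gibbs : ∀ n t, ∫ y, k (θ n) y * Real.log (k t y / k (θ n) y) ∂ν ≤ 0 := by
    intro n t
    have h1 : ∫ y, (k t y - k (θ n) y) ∂ν = 0 := by
      rw [integral_sub (hkInt t) (hkInt (θ n)), hknorm, hknorm]; ring
    calc ∫ y, k (θ n) y * Real.log (k t y / k (θ n) y) ∂ν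
        ≤ ∫ y, (k t y - k (θ n) y) ∂ν := by
          apply integral_mono (hInt2 n t) ((hkInt t).sub (hkInt (θ n)))
          intro y
          have hky := hk (θ n) y
          have hkt := hk t y
          have h2 := mul_le_mul_of_nonneg_left
            (Real.log_le_sub_one_of_pos (div_pos hkt hky)) hky.le
          have h3 : k (θ n) y * (k t y / k (θ n) y - 1) = k t y - k (θ n) y := by
            field_simp
          simp only [Pi.sub_apply]
          linarith
      _ = 0 := h1
  have key1 : ∀ n, 0 ≤ ∫ y, (k (θ n) y) ^ α * (p y) ^ (1 - α) *
      Real.log (k (θ (n + 1)) y / k (θ n) y) ∂ν := by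
    intro n
    have h0 := hmax n (θ n)
    have hz : ∫ y, ((k (θ n) y) ^ α * (p y) ^ (1 - α) + b n * k (θ n) y) *
        Real.log (k (θ n) y / k (θ n) y) ∂ν = 0 := by
      rw [show (fun y => ((k (θ n) y) ^ α * (p y) ^ (1 - α) + b n * k (θ n) y) *
          Real.log (k (θ n) y / k (θ n) y)) = (fun _ => (0:ℝ)) from
        funext fun y => by rw [div_self (hk (θ n) y).ne', Real.log_one, mul_zero],
        integral_zero]
    rw [hz] at h0
    have hsplit : ∫ y, ((k (θ n) y) ^ α * (p y) ^ (1 - α) + b n * k (θ n) y) *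
        Real.log (k (θ (n + 1)) y / k (θ n) y) ∂ν =
        (∫ y, (k (θ n) y) ^ α * (p y) ^ (1 - α) *
          Real.log (k (θ (n + 1)) y / k (θ n) y) ∂ν) +
        b n * ∫ y, k (θ n) y * Real.log (k (θ (n + 1)) y / k (θ n) y) ∂ν := by
      rw [show (fun y => ((k (θ n) y) ^ α * (p y) ^ (1 - α) + b n * k (θ n) y) *
          Real.log (k (θ (n + 1)) y / k (θ n) y)) =
          (fun y => (k (θ n) y) ^ α * (p y) ^ (1 - α) *
            Real.log (k (θ (n + 1)) y / k (θ n) y) +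
            b n * (k (θ n) y * Real.log (k (θ (n + 1)) y / k (θ n) y))) from
        funext fun y => by ring]
      rw [integral_add (hInt1 n (θ (n + 1)))
        ((hInt2 n (θ (n + 1))).const_mul (b n)), integral_const_mul]
    rw [hsplit] at h0
    have hg := gibbs n (θ (n + 1))
    nlinarith [hb n]
  have part1 : ∀ n, ∫ y, (k (θ n) y) ^ α * (p y) ^ (1 - α) / (α - 1) *
      Real.log (k (θ (n + 1)) y / k (θ n) y) ∂ν ≤ 0 := by
    intro n
    rw [show (fun y => (k (θ n) y) ^ α * (p y) ^ (1 - α) / (α - 1) *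
        Real.log (k (θ (n + 1)) y / k (θ n) y)) =
        (fun y => ((k (θ n) y) ^ α * (p y) ^ (1 - α) *
          Real.log (k (θ (n + 1)) y / k (θ n) y)) / (α - 1)) from
      funext fun y => by ring, integral_div]
    exact div_nonpos_of_nonneg_of_nonpos (key1 n) (by linarith)
  refine ⟨part1, fun n => ?_⟩
  have hInth : Integrable (fun y => (k (θ n) y) ^ α * (p y) ^ (1 - α) / (α - 1) *
      Real.log (k (θ (n + 1)) y / k (θ n) y)) ν := by
    rw [show (fun y => (k (θ n) y) ^ α * (p y) ^ (1 - α) / (α - 1) *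
        Real.log (k (θ (n + 1)) y / k (θ n) y)) =
        (fun y => ((k (θ n) y) ^ α * (p y) ^ (1 - α) *
          Real.log (k (θ (n + 1)) y / k (θ n) y)) / (α - 1)) from
      funext fun y => by ring]
    exact (hInt1 n (θ (n + 1))).div_const _
  have hmono := integral_mono ((hΨInt (n + 1)).sub (hΨInt n)) hInth
    (fun y => pointwise_key α hα0 hα1 (k (θ n) y) (k (θ (n + 1)) y) (p y)
      (hk _ _) (hk _ _) (hp y))
  rw [integral_sub' (hΨInt (n + 1)) (hΨInt n)] at hmono
  linarith [part1 n]
end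

section
/- Assume A1 and α ∈ [0,1). Let mixture iterates (λ_n, Θ_n) ∈ S_J^+ × T^J with mixture density μ_n k(y) = Σ_j λ_{j,n} k(θ_{j,n},y). If for all n both ∫ Σ_j λ_{j,n} (φ_{j,n}^α(y)/(α-1)) log(λ_{j,n+1}/λ_{j,n}) ν(dy) ≤ 0 and ∫ Σ_j λ_{j,n} (φ_{j,n}^α(y)/(α-1)) log(k(θ_{j,n+1},y)/k(θ_{j,n},y)) ν(dy) ≤ 0, where φ_{j,n}^α(y) = k(θ_{j,n},y)(μ_n k(y)/p(y))^{α-1}, and Ψ_α(μ_1 k) < ∞, then Ψ_α(μ_{n+1}k) ≤ Ψ_α(μ_n k) for all n ≥ 1. -/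
/-!
From `e^x ≥ 1 + x` one gets the tangent bound `f_α(v) ≤ f_α(u) + u^α log(v/u) / (α - 1)`.
Taking `u = μ_n k / p`, `v = μ_{n+1} k / p` and multiplying by `p` bounds the integrand of
`Ψ_α(μ_{n+1} k)` by that of `Ψ_α(μ_n k)` plus
`(μ_n k)^α p^{1-α} / (α - 1) · log (μ_{n+1} k / μ_n k)`.
The prefactor is nonpositive, so Jensen's inequality for `log` with the weights
`λ_{j,n} k(θ_{j,n}, ·) / μ_n k` bounds this term by the sum of the weight part and the parameter
part of the update, whose integrals are nonpositive by assumption.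
-/

open MeasureTheory

open Finset Real

theorem falpha_le_add_rpow_mul_log {α u v : ℝ} (hα0 : 0 ≤ α) (hα1 : α < 1) (hu : 0 < u)
    (hv : 0 < v) : falpha α v ≤ falpha α u + u ^ α / (α - 1) * log (v / u) := by
  rcases hα0.eq_or_lt with rfl | hα0
  · simp [falpha, log_div hv.ne' hu.ne']
  have hv_eq : v ^ α = u ^ α * exp (α * log (v / u)) := by
    rw [mul_comm α, ← rpow_def_of_pos (div_pos hv hu), div_rpow hv.le hu.le,
      mul_div_cancel₀ _ (rpow_pos_of_pos hu α).ne']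
  have hgrowth : u ^ α * (α * log (v / u)) ≤ v ^ α - u ^ α := by
    nlinarith [add_one_le_exp (α * log (v / u)), rpow_pos_of_pos hu α]
  have hden : α * (α - 1) < 0 := mul_neg_of_pos_of_neg hα0 (by linarith)
  have hrhs : falpha α u + u ^ α / (α - 1) * log (v / u) =
      (u ^ α - 1 + u ^ α * (α * log (v / u))) / (α * (α - 1)) := by
    simp only [falpha, if_neg hα0.ne']
    field_simp
  rw [hrhs, falpha, if_neg hα0.ne']
  exact div_le_div_of_nonpos_of_le hden.le (by linarith)

-- At `p = 0` both sides vanish, through `m / 0 = 0` and `0 ^ (α - 1) = 0`.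
theorem rpow_mul_rpow_one_sub {α m p : ℝ} (hα : α ≠ 1) (hm : 0 < m) (hp : 0 ≤ p) :
    m ^ α * p ^ (1 - α) = m * (m / p) ^ (α - 1) := by
  rcases hp.eq_or_lt with rfl | hp
  · simp [zero_rpow (sub_ne_zero.2 hα.symm), zero_rpow (sub_ne_zero.2 hα)]
  rw [div_rpow hm.le hp.le, rpow_sub_one hm.ne', ← neg_sub, rpow_neg hp.le]
  field_simp

theorem sum_div_mul_log_div_le_log_sum_div_sum {ι : Type*} {s : Finset ι} (hs : s.Nonempty)
    {a b : ι → ℝ} (ha : ∀ i ∈ s, 0 < a i) (hb : ∀ i ∈ s, 0 < b i) :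
    ∑ i ∈ s, a i / (∑ j ∈ s, a j) * log (b i / a i) ≤
      log ((∑ i ∈ s, b i) / ∑ i ∈ s, a i) := by
  have hA : 0 < ∑ j ∈ s, a j := sum_pos ha hs
  have hjensen := strictConcaveOn_log_Ioi.concaveOn.le_map_sum
    (w := fun i => a i / ∑ j ∈ s, a j) (p := fun i => b i / a i)
    (fun i hi => (div_pos (ha i hi) hA).le) (by rw [← sum_div, div_self hA.ne'])
    (fun i hi => Set.mem_Ioi.2 (div_pos (hb i hi) (ha i hi)))
  refine hjensen.trans_eq (congrArg log ?_)
  rw [sum_div]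
  refine sum_congr rfl fun i hi => ?_
  simp only [smul_eq_mul]
  field_simp [(ha i hi).ne']

theorem falpha_div_mul_le {α m m' p : ℝ} (hα0 : 0 ≤ α) (hα1 : α < 1) (hm : 0 < m)
    (hm' : 0 < m') (hp : 0 ≤ p) :
    falpha α (m' / p) * p ≤
      falpha α (m / p) * p + m ^ α * p ^ (1 - α) / (α - 1) * log (m' / m) := by
  rcases hp.eq_or_lt with rfl | hp
  · simp [zero_rpow (sub_ne_zero.2 hα1.ne')]
  have h := mul_le_mul_of_nonneg_right
    (falpha_le_add_rpow_mul_log hα0 hα1 (div_pos hm hp) (div_pos hm' hp)) hp.le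
  refine h.trans_eq ?_
  rw [rpow_mul_rpow_one_sub hα1.ne hm hp.le, rpow_sub_one (div_pos hm hp).ne']
  field_simp

theorem rpow_mul_rpow_one_sub_mul_log_mixture_le {ι : Type*} [Fintype ι] [Nonempty ι]
    {α p : ℝ} (hα1 : α < 1) (hp : 0 ≤ p) {w w' κ κ' : ι → ℝ} (hw : ∀ j, 0 < w j)
    (hw' : ∀ j, 0 < w' j) (hκ : ∀ j, 0 < κ j) (hκ' : ∀ j, 0 < κ' j) :
    (∑ j, w j * κ j) ^ α * p ^ (1 - α) / (α - 1) *
        log ((∑ j, w' j * κ' j) / ∑ j, w j * κ j) ≤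
      (∑ j, w j * (κ j * ((∑ i, w i * κ i) / p) ^ (α - 1)) / (α - 1) *
        log (w' j / w j)) +
      ∑ j, w j * (κ j * ((∑ i, w i * κ i) / p) ^ (α - 1)) / (α - 1) *
        log (κ' j / κ j) := by
  set m := ∑ i, w i * κ i with hm_def
  have hm : 0 < m := sum_pos (fun j _ => mul_pos (hw j) (hκ j)) univ_nonempty
  have hc : m ^ α * p ^ (1 - α) / (α - 1) ≤ 0 :=
    div_nonpos_of_nonneg_of_nonpos (by positivity) (by linarith)
  have hjensen := mul_le_mul_of_nonpos_left
    (sum_div_mul_log_div_le_log_sum_div_sum univ_nonempty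
      (fun j _ => mul_pos (hw j) (hκ j)) (fun j _ => mul_pos (hw' j) (hκ' j))) hc
  refine hjensen.trans_eq ?_
  rw [← hm_def, mul_sum, ← sum_add_distrib]
  refine sum_congr rfl fun j _ => ?_
  rw [rpow_mul_rpow_one_sub hα1.ne hm hp, mul_div_mul_comm,
    log_mul (div_pos (hw' j) (hw j)).ne' (div_pos (hκ' j) (hκ j)).ne']
  field_simp

theorem stmt_9_general {Y T : Type*} [MeasurableSpace Y] (ν : Measure Y)
    (α : ℝ) (hα0 : 0 ≤ α) (hα1 : α < 1) (J : ℕ)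
    (k : T → Y → ℝ) (p : Y → ℝ)
    (hk : ∀ θ y, 0 < k θ y)
    (hp : ∀ y, 0 ≤ p y)
    (lam : ℕ → Fin J → ℝ) (Θ : ℕ → Fin J → T)
    (hlampos : ∀ n j, 0 < lam n j) (hlamsum : ∀ n, ∑ j, lam n j = 1)
    (hΨInt : ∀ n, Integrable
      (fun y => falpha α ((∑ j, lam n j * k (Θ n j) y) / p y) * p y) ν)
    (hIntW : ∀ n, Integrable (fun y => ∑ j, lam n j *
        (k (Θ n j) y * ((∑ i, lam n i * k (Θ n i) y) / p y) ^ (α - 1)) / (α - 1) *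
        Real.log (lam (n + 1) j / lam n j)) ν)
    (hIntP : ∀ n, Integrable (fun y => ∑ j, lam n j *
        (k (Θ n j) y * ((∑ i, lam n i * k (Θ n i) y) / p y) ^ (α - 1)) / (α - 1) *
        Real.log (k (Θ (n + 1) j) y / k (Θ n j) y)) ν)
    (hcondW : ∀ n, ∫ y, (∑ j, lam n j *
        (k (Θ n j) y * ((∑ i, lam n i * k (Θ n i) y) / p y) ^ (α - 1)) / (α - 1) *
        Real.log (lam (n + 1) j / lam n j)) ∂ν ≤ 0)
    (hcondP : ∀ n, ∫ y, (∑ j, lam n j *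
        (k (Θ n j) y * ((∑ i, lam n i * k (Θ n i) y) / p y) ^ (α - 1)) / (α - 1) *
        Real.log (k (Θ (n + 1) j) y / k (Θ n j) y)) ∂ν ≤ 0) :
    ∀ n, ∫ y, falpha α ((∑ j, lam (n + 1) j * k (Θ (n + 1) j) y) / p y) * p y ∂ν ≤
      ∫ y, falpha α ((∑ j, lam n j * k (Θ n j) y) / p y) * p y ∂ν := by
  intro n
  have : Nonempty (Fin J) := by
    by_contra h
    simpa [not_nonempty_iff.mp h] using hlamsum 0
  have hmix : ∀ n y, 0 < ∑ j, lam n j * k (Θ n j) y := fun n y =>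
    sum_pos (fun j _ => mul_pos (hlampos n j) (hk _ y)) univ_nonempty
  have hpointwise := fun y => (falpha_div_mul_le hα0 hα1 (hmix n y) (hmix (n + 1) y) (hp y)).trans
    (add_le_add_right (rpow_mul_rpow_one_sub_mul_log_mixture_le hα1 (hp y) (hlampos n)
      (hlampos (n + 1)) (fun j => hk _ y) (fun j => hk _ y)) _)
  have hintegrated := integral_mono (hΨInt (n + 1))
    ((hΨInt n).add ((hIntW n).add (hIntP n))) hpointwise
  rw [integral_add' (hΨInt n) ((hIntW n).add (hIntP n)), integral_add' (hIntW n) (hIntP n)]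
    at hintegrated
  linarith [hcondW n, hcondP n]

theorem stmt_9 {Y T : Type*} [MeasurableSpace Y] (ν : Measure Y) [SigmaFinite ν]
    (α : ℝ) (hα0 : 0 ≤ α) (hα1 : α < 1) (J : ℕ)
    (k : T → Y → ℝ) (p : Y → ℝ)
    (hk : ∀ θ y, 0 < k θ y) (hknorm : ∀ θ, ∫ y, k θ y ∂ν = 1)
    (hp : ∀ y, 0 ≤ p y) (hpInt : Integrable p ν) (hppos : 0 < ∫ y, p y ∂ν)
    (lam : ℕ → Fin J → ℝ) (Θ : ℕ → Fin J → T)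
    (hlampos : ∀ n j, 0 < lam n j) (hlamsum : ∀ n, ∑ j, lam n j = 1)
    (hΨInt : ∀ n, Integrable
      (fun y => falpha α ((∑ j, lam n j * k (Θ n j) y) / p y) * p y) ν)
    (hIntW : ∀ n, Integrable (fun y => ∑ j, lam n j *
        (k (Θ n j) y * ((∑ i, lam n i * k (Θ n i) y) / p y) ^ (α - 1)) / (α - 1) *
        Real.log (lam (n + 1) j / lam n j)) ν)
    (hIntP : ∀ n, Integrable (fun y => ∑ j, lam n j *
        (k (Θ n j) y * ((∑ i, lam n i * k (Θ n i) y) / p y) ^ (α - 1)) / (α - 1) *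
        Real.log (k (Θ (n + 1) j) y / k (Θ n j) y)) ν)
    (hIntM : ∀ n, Integrable (fun y =>
        (∑ j, lam n j * k (Θ n j) y) ^ α * (p y) ^ (1 - α) / (α - 1) *
        Real.log ((∑ j, lam (n + 1) j * k (Θ (n + 1) j) y) /
          (∑ j, lam n j * k (Θ n j) y))) ν)
    (hcondW : ∀ n, ∫ y, (∑ j, lam n j *
        (k (Θ n j) y * ((∑ i, lam n i * k (Θ n i) y) / p y) ^ (α - 1)) / (α - 1) *
        Real.log (lam (n + 1) j / lam n j)) ∂ν ≤ 0)
    (hcondP : ∀ n, ∫ y, (∑ j, lam n j *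
        (k (Θ n j) y * ((∑ i, lam n i * k (Θ n i) y) / p y) ^ (α - 1)) / (α - 1) *
        Real.log (k (Θ (n + 1) j) y / k (Θ n j) y)) ∂ν ≤ 0) :
    ∀ n, ∫ y, falpha α ((∑ j, lam (n + 1) j * k (Θ (n + 1) j) y) / p y) * p y ∂ν ≤
      ∫ y, falpha α ((∑ j, lam n j * k (Θ n j) y) / p y) * p y ∂ν :=
  stmt_9_general ν α hα0 hα1 J k p hk hp lam Θ hlampos hlamsum hΨInt hIntW hIntP hcondW hcondP
end

section
/- Assume A1, α ∈ [0,1), η_n ∈ (0,1], and (α-1)κ_n ≥ 0. If the mixture weights are updated by λ_{j,n+1} = λ_{j,n}[∫φ_{j,n}^α dν + (α-1)κ_n]^{η_n} / Σ_ℓ λ_{ℓ,n}[∫φ_{ℓ,n}^α dν + (α-1)κ_n]^{η_n}, then ∫ Σ_j λ_{j,n} (φ_{j,n}^α(y)/(α-1)) log(λ_{j,n+1}/λ_{j,n}) ν(dy) ≤ 0. -/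
open MeasureTheory

open Finset in
lemma stmt_14_aux {J : ℕ} (lam F : Fin J → ℝ) (c η : ℝ)
    (hne : (Finset.univ : Finset (Fin J)).Nonempty)
    (hlam : ∀ j, 0 < lam j) (hsum : ∑ j, lam j = 1)
    (hF : ∀ j, 0 < F j) (hc : 0 ≤ c) (hη0 : 0 < η) (hη1 : η ≤ 1) :
    0 ≤ ∑ j, lam j * (F j - c) *
      (η * Real.log (F j) - Real.log (∑ l, lam l * F l ^ η)) := by
  set S := ∑ l, lam l * F l ^ η with hSdef
  set M := ∑ l, lam l * F l with hMdef
  have hMpos : 0 < M := Finset.sum_pos (fun l _ => mul_pos (hlam l) (hF l)) hne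
  have hSpos : 0 < S :=
    Finset.sum_pos (fun l _ => mul_pos (hlam l) (Real.rpow_pos_of_pos (hF l) η)) hne
  have hB : ∑ j, lam j * (η * Real.log (F j)) ≤ Real.log S := by
    have h := strictConcaveOn_log_Ioi.concaveOn.le_map_sum
      (t := Finset.univ) (w := lam) (p := fun j => F j ^ η)
      (fun j _ => (hlam j).le) hsum (fun j _ => Real.rpow_pos_of_pos (hF j) η)
    calc ∑ j, lam j * (η * Real.log (F j))
        = ∑ j, lam j • Real.log (F j ^ η) := by
          refine Finset.sum_congr rfl fun j _ => ?_
          rw [smul_eq_mul, Real.log_rpow (hF j)]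
      _ ≤ Real.log (∑ j, lam j • F j ^ η) := h
      _ = Real.log S := by simp [smul_eq_mul, hSdef]
  have hGibbs : M * Real.log M ≤ ∑ j, lam j * F j * Real.log (F j) := by
    have hw1 : ∑ j, lam j * F j / M = 1 := by
      rw [← Finset.sum_div, ← hMdef, div_self hMpos.ne']
    have h := strictConcaveOn_log_Ioi.concaveOn.le_map_sum
      (t := Finset.univ) (w := fun j => lam j * F j / M) (p := fun j => M / F j)
      (fun j _ => div_nonneg (mul_nonneg (hlam j).le (hF j).le) hMpos.le) hw1 (fun j _ => div_pos hMpos (hF j))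
    have hz : ∑ j : Fin J, (lam j * F j / M) • (M / F j) = 1 := by
      rw [← hsum]
      refine Finset.sum_congr rfl fun j _ => ?_
      rw [smul_eq_mul,
        show lam j * F j / M * (M / F j) = lam j * (F j / F j) * (M / M) by ring,
        div_self (hF j).ne', div_self hMpos.ne', mul_one, mul_one]
    rw [hz, Real.log_one] at h
    have h' : ∑ j, lam j * F j / M * Real.log (M / F j) ≤ 0 := by
      simpa [smul_eq_mul] using h
    have h'' : M * ∑ j, lam j * F j / M * Real.log (M / F j) ≤ 0 := by
      simpa using mul_le_mul_of_nonneg_left h' hMpos.le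
    have hexp : M * ∑ j, lam j * F j / M * Real.log (M / F j)
        = M * Real.log M - ∑ j, lam j * F j * Real.log (F j) := by
      rw [Finset.mul_sum]
      have hterm : ∀ j, M * (lam j * F j / M * Real.log (M / F j))
          = lam j * F j * Real.log M - lam j * F j * Real.log (F j) := by
        intro j
        rw [Real.log_div hMpos.ne' (hF j).ne']
        field_simp
      rw [Finset.sum_congr rfl fun j _ => hterm j, Finset.sum_sub_distrib,
        ← Finset.sum_mul, ← hMdef]
    linarith [hexp ▸ h'']
  have hSM : S ≤ M ^ η := by
    have h := (Real.concaveOn_rpow hη0.le hη1).le_map_sum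
      (t := Finset.univ) (w := lam) (p := F)
      (fun j _ => (hlam j).le) hsum (fun j _ => (hF j).le)
    simpa [smul_eq_mul, ← hSdef, ← hMdef] using h
  have hlogS : Real.log S ≤ η * Real.log M := by
    calc Real.log S ≤ Real.log (M ^ η) := Real.log_le_log hSpos hSM
      _ = η * Real.log M := Real.log_rpow hMpos η
  have expand : ∑ j, lam j * (F j - c) * (η * Real.log (F j) - Real.log S)
      = (η * ∑ j, lam j * F j * Real.log (F j) - M * Real.log S)
        + c * (Real.log S - ∑ j, lam j * (η * Real.log (F j))) := by
    have h1 : ∑ j, lam j * (F j - c) * (η * Real.log (F j) - Real.log S)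
        = ∑ j, (η * (lam j * F j * Real.log (F j)) - lam j * F j * Real.log S
            - c * (lam j * (η * Real.log (F j))) + c * Real.log S * lam j) :=
      Finset.sum_congr rfl fun j _ => by ring
    rw [h1, Finset.sum_add_distrib, Finset.sum_sub_distrib, Finset.sum_sub_distrib,
      ← Finset.mul_sum, ← Finset.sum_mul, ← Finset.mul_sum, ← Finset.mul_sum,
      ← hMdef, hsum]
    ring
  rw [expand]
  have t1 : M * Real.log S ≤ η * ∑ j, lam j * F j * Real.log (F j) := by
    calc M * Real.log S ≤ M * (η * Real.log M) :=
          mul_le_mul_of_nonneg_left hlogS hMpos.le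
      _ = η * (M * Real.log M) := by ring
      _ ≤ η * ∑ j, lam j * F j * Real.log (F j) :=
          mul_le_mul_of_nonneg_left hGibbs hη0.le
  have t2 : 0 ≤ c * (Real.log S - ∑ j, lam j * (η * Real.log (F j))) :=
    mul_nonneg hc (by linarith)
  linarith

theorem stmt_14 {Y T : Type*} [MeasurableSpace Y] (ν : Measure Y) [SigmaFinite ν]
    (α : ℝ) (hα0 : 0 ≤ α) (hα1 : α < 1) (J : ℕ)
    (k : T → Y → ℝ) (p : Y → ℝ)
    (hk : ∀ θ y, 0 < k θ y) (hknorm : ∀ θ, ∫ y, k θ y ∂ν = 1)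
    (hp : ∀ y, 0 ≤ p y) (hpInt : Integrable p ν) (hppos : 0 < ∫ y, p y ∂ν)
    (η κc : ℝ) (hη0 : 0 < η) (hη1 : η ≤ 1) (hκ : 0 ≤ (α - 1) * κc)
    (lam lam' : Fin J → ℝ) (Θ : Fin J → T)
    (hlampos : ∀ j, 0 < lam j) (hlamsum : ∑ j, lam j = 1)
    (hφInt : ∀ j, Integrable
      (fun y => k (Θ j) y * ((∑ l, lam l * k (Θ l) y) / p y) ^ (α - 1)) ν)
    (hupdate : ∀ j, lam' j =
      lam j * ((∫ y, k (Θ j) y *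
            ((∑ l, lam l * k (Θ l) y) / p y) ^ (α - 1) ∂ν) + (α - 1) * κc) ^ η /
        ∑ l, lam l * ((∫ y, k (Θ l) y *
            ((∑ i, lam i * k (Θ i) y) / p y) ^ (α - 1) ∂ν) + (α - 1) * κc) ^ η) :
    ∫ y, (∑ j, lam j *
        (k (Θ j) y * ((∑ l, lam l * k (Θ l) y) / p y) ^ (α - 1)) / (α - 1) *
        Real.log (lam' j / lam j)) ∂ν ≤ 0 := by
  have hα : α - 1 < 0 := by linarith
  have hne : (Finset.univ : Finset (Fin J)).Nonempty := by
    by_contra h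
    rw [Finset.not_nonempty_iff_eq_empty] at h
    rw [h, Finset.sum_empty] at hlamsum
    norm_num at hlamsum
  set c : ℝ := (α - 1) * κc with hcdef
  set I : Fin J → ℝ := fun j =>
    ∫ y, k (Θ j) y * ((∑ l, lam l * k (Θ l) y) / p y) ^ (α - 1) ∂ν with hIdef
  set F : Fin J → ℝ := fun j => I j + c with hFdef
  set S : ℝ := ∑ l, lam l * F l ^ η with hSdef
  have hqpos : ∀ y, 0 < ∑ l, lam l * k (Θ l) y := fun y =>
    Finset.sum_pos (fun l _ => mul_pos (hlampos l) (hk _ y)) hne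
  have hφpos : ∀ j y, 0 < p y →
      0 < k (Θ j) y * ((∑ l, lam l * k (Θ l) y) / p y) ^ (α - 1) :=
    fun j y hpy => mul_pos (hk _ y) (Real.rpow_pos_of_pos (div_pos (hqpos y) hpy) _)
  have hφnn : ∀ j y, 0 ≤ k (Θ j) y * ((∑ l, lam l * k (Θ l) y) / p y) ^ (α - 1) := by
    intro j y
    rcases (hp y).lt_or_eq with h | h
    · exact (hφpos j y h).le
    · rw [← h, div_zero, Real.zero_rpow (by linarith : α - 1 ≠ 0), mul_zero]
  have hpsupp : 0 < ν (Function.support p) :=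
    (integral_pos_iff_support_of_nonneg hp hpInt).mp hppos
  have hIpos : ∀ j, 0 < I j := by
    intro j
    rw [hIdef]
    rw [integral_pos_iff_support_of_nonneg (fun y => hφnn j y) (hφInt j)]
    refine lt_of_lt_of_le hpsupp (measure_mono ?_)
    intro y hy
    have hpy : 0 < p y := (hp y).lt_of_ne (Ne.symm hy)
    exact (hφpos j y hpy).ne'
  have hcnn : 0 ≤ c := hκ
  have hFpos : ∀ j, 0 < F j := fun j => by
    have := hIpos j; rw [hFdef]; dsimp only; linarith
  have hSpos : 0 < S := by
    rw [hSdef]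
    exact Finset.sum_pos
      (fun l _ => mul_pos (hlampos l) (Real.rpow_pos_of_pos (hFpos l) η)) hne
  have hup : ∀ j, lam' j = lam j * F j ^ η / S := by
    intro j
    rw [hupdate j]
  have hlog : ∀ j, Real.log (lam' j / lam j) = η * Real.log (F j) - Real.log S := by
    intro j
    have hlne : lam j ≠ 0 := (hlampos j).ne'
    have h1 : lam' j / lam j = F j ^ η / S := by
      rw [hup j]
      field_simp
    rw [h1, Real.log_div (Real.rpow_pos_of_pos (hFpos j) η).ne' hSpos.ne',
      Real.log_rpow (hFpos j)]
  have hInteg : ∀ j : Fin J, Integrable (fun y =>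
      lam j * (k (Θ j) y * ((∑ l, lam l * k (Θ l) y) / p y) ^ (α - 1)) / (α - 1) *
      Real.log (lam' j / lam j)) ν := fun j =>
    (((hφInt j).const_mul (lam j)).div_const (α - 1)).mul_const _
  rw [integral_finset_sum Finset.univ (fun j _ => hInteg j)]
  have hint : ∀ j : Fin J,
      (∫ y, lam j * (k (Θ j) y * ((∑ l, lam l * k (Θ l) y) / p y) ^ (α - 1)) /
        (α - 1) * Real.log (lam' j / lam j) ∂ν)
      = lam j / (α - 1) * Real.log (lam' j / lam j) * I j := by
    intro j
    rw [show (fun y => lam j * (k (Θ j) y *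
          ((∑ l, lam l * k (Θ l) y) / p y) ^ (α - 1)) / (α - 1) *
          Real.log (lam' j / lam j))
        = fun y => (lam j / (α - 1) * Real.log (lam' j / lam j)) *
          (k (Θ j) y * ((∑ l, lam l * k (Θ l) y) / p y) ^ (α - 1))
      from funext fun y => by ring]
    rw [integral_const_mul]
  rw [Finset.sum_congr rfl fun j _ => hint j]
  have hrw : ∀ j : Fin J, lam j / (α - 1) * Real.log (lam' j / lam j) * I j
      = lam j * (F j - c) * (η * Real.log (F j) - Real.log S) / (α - 1) := by
    intro j
    rw [hlog j]
    have : I j = F j - c := by rw [hFdef]; ring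
    rw [this]
    ring
  rw [Finset.sum_congr rfl fun j _ => hrw j, ← Finset.sum_div]
  have hnum := stmt_14_aux lam F c η hne hlampos hlamsum hFpos hcnn hη0 hη1
  rw [← hSdef] at hnum
  exact div_nonpos_of_nonneg_of_nonpos hnum hα.le
end
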